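/- arXiv:1110.4882 — 9 statements merged into one kernel-verified Lean document; each statement's English description precedes it below -/
import Mathlib

section
/- Let G=(V,E) be a finite directed multigraph and let x,y : E → ℝ satisfy ρ_x(i) = ρ_y(i) for every node i ∈ V. Then for every arc a ∈ E with x_a > y_a, the arc of the difference multigraph D_{x,y} corresponding to a lies on a directed cycle of D_{x,y}. -/
open Finset

/-- Net inflow `ρ_x(i)` of a vector `x : E → ℝ` at a node `i` of a finite directed
multigraph given by `tail, head : E → V`. -/
def netInflow {V E : Type*} [Fintype E] [DecidableEq V]
    (tail head : E → V) (x : E → ℝ) (i : V) : ℝ :=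
  (∑ a ∈ Finset.univ.filter (fun a => head a = i), x a)
    - (∑ a ∈ Finset.univ.filter (fun a => tail a = i), x a)

/-!
Let `S` be the set of vertices reachable from `head a` in `D_{x,y}`. No arc of `D_{x,y}` leaves
`S`, so every arc of `G` entering `S` has `x ≥ y` and every arc leaving it has `x ≤ y`. These
contributions add up to the net inflow of `x - y` into `S`, which vanishes as `ρ_x = ρ_y`; the
arc `a` has `x_a > y_a`, so it cannot enter `S`, i.e. `tail a` is reachable from `head a`.
A path without repeated vertices from `head a` to `tail a`, closed up by `a`, is the cycle.
-/

open Relation Function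

namespace List

theorem exists_isChain_cons_nodup_of_relationReflTransGen {α : Type*} {r : α → α → Prop}
    {a b : α} (h : ReflTransGen r a b) :
    ∃ l, IsChain r (a :: l) ∧ getLast (a :: l) (cons_ne_nil _ _) = b ∧ (a :: l).Nodup := by
  induction h using Relation.ReflTransGen.head_induction_on with
  | refl => exact ⟨[], .singleton _, rfl, nodup_singleton _⟩
  | @head a c hac _ ih =>
    obtain ⟨l, hchain, hlast, hnodup⟩ := ih
    by_cases ha : a ∈ c :: l
    · obtain ⟨s, t, hst⟩ := append_of_mem ha
      have hsuf : a :: t <:+ c :: l := ⟨s, hst.symm⟩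
      refine ⟨t, hchain.suffix hsuf, ?_, hsuf.sublist.nodup hnodup⟩
      simpa only [hst, getLast_append_of_right_ne_nil _ _ (cons_ne_nil _ _)] using hlast
    · exact ⟨c :: l, .cons_cons hac hchain, by rwa [getLast_cons_cons],
        nodup_cons.2 ⟨ha, hnodup⟩⟩

end List

theorem Relation.ReflTransGen.exists_injective_cycle {α : Type*} {r : α → α → Prop} {u v : α}
    (h : ReflTransGen r u v) :
    ∃ k, ∃ w : Fin (k + 1) → α,
      Injective w ∧ w 0 = v ∧ w 1 = u ∧ ∀ i ≠ 0, r (w i) (w (i + 1)) := by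
  obtain ⟨l, hchain, hlast, hnodup⟩ := List.exists_isChain_cons_nodup_of_relationReflTransGen h
  -- `w` lists `u :: l` rotated by one step, so that it starts at its last vertex `v`
  refine ⟨l.length, fun i => (u :: l).get (i - 1),
    (List.nodup_iff_injective_get.1 hnodup).comp sub_left_injective, ?_, ?_, fun i hi => ?_⟩
  · simp [← hlast, List.getLast_eq_getElem]
  · simp
  · have hi' : (i : ℕ) - 1 + 1 = i := Nat.sub_add_cancel (Fin.pos_iff_ne_zero.2 hi)
    have hstep := hchain.getElem (i - 1) (by simp; omega)
    simpa only [List.get_eq_getElem, Fin.coe_sub_one, hi, if_false, add_sub_cancel_right, hi']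
      using hstep

section ArcCycle

variable {V A : Type*} (src tgt : A → V)

def ArcAdj (u v : V) : Prop := ∃ e, src e = u ∧ tgt e = v

theorem exists_cycle_through_arc {a : A} (h : ReflTransGen (ArcAdj src tgt) (tgt a) (src a)) :
    ∃ k, ∃ c : Fin (k + 1) → A, Injective (fun i => src (c i)) ∧
      (∀ i, tgt (c i) = src (c (i + 1))) ∧ ∃ i, c i = a := by
  obtain ⟨k, w, hinj, hw0, hw1, hstep⟩ := h.exists_injective_cycle
  have harc : ∀ i, ∃ e, src e = w i ∧ tgt e = w (i + 1) ∧ (i = 0 → e = a) := by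
    intro i
    by_cases hi : i = 0
    · subst hi
      exact ⟨a, hw0.symm, by rw [zero_add, hw1], fun _ => rfl⟩
    · obtain ⟨e, hsrc, htgt⟩ := hstep i hi
      exact ⟨e, hsrc, htgt, fun h => absurd h hi⟩
  choose c hsrc htgt hc0 using harc
  refine ⟨k, c, ?_, fun i => (htgt i).trans (hsrc _).symm, 0, hc0 0 rfl⟩
  simpa only [hsrc] using hinj

end ArcCycle

section DifferenceGraph

variable {V E : Type*} (tail head : E → V) (x y : E → ℝ)

noncomputable def diffTail (e : {e : E // x e ≠ y e}) : V :=
  if y e < x e then tail e else head e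

noncomputable def diffHead (e : {e : E // x e ≠ y e}) : V :=
  if y e < x e then head e else tail e

variable [Fintype E] [DecidableEq V]

theorem netInflow_sub (i : V) :
    netInflow tail head (x - y) i = netInflow tail head x i - netInflow tail head y i := by
  simp only [netInflow, Pi.sub_apply, sum_sub_distrib]
  ring

theorem sum_netInflow (S : Finset V) :
    ∑ i ∈ S, netInflow tail head x i =
      ∑ e, ((if head e ∈ S then x e else 0) - (if tail e ∈ S then x e else 0)) := by
  unfold netInflow
  rw [sum_sub_distrib, sum_fiberwise_eq_sum_filter, sum_fiberwise_eq_sum_filter, sum_filter,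
    sum_filter, sum_sub_distrib]

theorem sum_netInflow_sub_pos_of_closed {S : Finset V}
    (hS : ∀ e, diffTail tail head x y e ∈ S → diffHead tail head x y e ∈ S)
    {a : E} (ha : y a < x a) (hhead : head a ∈ S) (htail : tail a ∉ S) :
    0 < ∑ i ∈ S, netInflow tail head (x - y) i := by
  rw [sum_netInflow]
  refine sum_pos' (fun e _ => ?_) ⟨a, mem_univ a, by simpa [hhead, htail]⟩
  rcases lt_trichotomy (x e) (y e) with hlt | heq | hgt
  · have hclosed := hS ⟨e, hlt.ne⟩
    simp only [diffTail, diffHead, hlt.not_gt, if_false] at hclosed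
    split_ifs <;> simp_all; linarith
  · simp [heq]
  · have hclosed := hS ⟨e, hgt.ne'⟩
    simp only [diffTail, diffHead, hgt, if_true] at hclosed
    split_ifs <;> simp_all; linarith

theorem reflTransGen_head_tail_of_netInflow_eq [Fintype V]
    (hρ : ∀ i, netInflow tail head x i = netInflow tail head y i) {a : E} (ha : y a < x a) :
    ReflTransGen (ArcAdj (diffTail tail head x y) (diffHead tail head x y)) (head a) (tail a) := by
  classical
  set R := ArcAdj (diffTail tail head x y) (diffHead tail head x y)
  by_contra hreach
  let S := univ.filter (ReflTransGen R (head a))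
  have hclosed : ∀ e, diffTail tail head x y e ∈ S → diffHead tail head x y e ∈ S := by
    simp only [S, mem_filter, mem_univ, true_and]
    exact fun e he => he.tail ⟨e, rfl, rfl⟩
  have hpos := sum_netInflow_sub_pos_of_closed tail head x y hclosed ha
    (by simp [S, ReflTransGen.refl]) (by simpa [S])
  simp only [netInflow_sub, hρ, sub_self, sum_const_zero, lt_self_iff_false] at hpos

end DifferenceGraph

/-- if `ρ_x = ρ_y`, then every arc `a` with `x_a > y_a` lies (as the
corresponding forward arc of the difference multigraph `D_{x,y}`) on a directed cycle of
`D_{x,y}`.  Arcs of `D_{x,y}` are the arcs `e` with `x_e ≠ y_e`, oriented from `tail e` to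
`head e` if `x_e > y_e` and reversed otherwise; a directed cycle is a cyclic sequence
`c 0, …, c k` of such arcs with pairwise distinct start vertices, each arc's endpoint
being the next arc's start vertex. -/
theorem stmt_0 {V E : Type*} [Fintype V] [Fintype E] [DecidableEq V]
    (tail head : E → V) (x y : E → ℝ)
    (hρ : ∀ i : V, netInflow tail head x i = netInflow tail head y i)
    (a : E) (ha : y a < x a) :
    ∃ k : ℕ, ∃ c : Fin (k + 1) → {e : E // x e ≠ y e},
      Function.Injective
        (fun i => if y (c i).1 < x (c i).1 then tail (c i).1 else head (c i).1) ∧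
      (∀ i : Fin (k + 1),
        (if y (c i).1 < x (c i).1 then head (c i).1 else tail (c i).1) =
          (if y (c (i + 1)).1 < x (c (i + 1)).1 then tail (c (i + 1)).1
            else head (c (i + 1)).1)) ∧
      (∃ i : Fin (k + 1), (c i).1 = a) := by
  have hreach := reflTransGen_head_tail_of_netInflow_eq tail head x y hρ ha
  obtain ⟨k, c, hinj, hcycle, i, hi⟩ := exists_cycle_through_arc (diffTail tail head x y)
    (diffHead tail head x y) (a := ⟨a, ha.ne'⟩) (by simpa [diffTail, diffHead, ha] using hreach)
  exact ⟨k, c, hinj, hcycle, i, congrArg Subtype.val hi⟩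
end

section
/- Suppose f, f* : E → ℝ are nonnegative, ρ_f(i) = ρ_{f*}(i) for every node i, and π, π* : V → ℝ are such that (f,π) and (f*,π*) each satisfy the optimality condition. Then for every arc a with f_a > 0 one has π*_{head(a)} − π*_{tail(a)} = C'_a(f*_a). (In particular, the support of any optimal solution is contained in the set F* of arcs that are tight for every optimal pair.) -/
open Finset

/-- Fiberwise summation helper. -/
lemma fiber_sum {V E : Type*} [Fintype V] [Fintype E] [DecidableEq V]
    (g : E → V) (π : V → ℝ) (x : E → ℝ) :
    ∑ i, π i * ∑ a ∈ Finset.univ.filter (fun a => g a = i), x a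
      = ∑ a, π (g a) * x a := by
  have : ∀ i : V, π i * ∑ a ∈ Finset.univ.filter (fun a => g a = i), x a
      = ∑ a ∈ Finset.univ.filter (fun a => g a = i), π (g a) * x a := by
    intro i
    rw [Finset.mul_sum]
    refine Finset.sum_congr rfl fun a ha => ?_
    simp only [Finset.mem_filter] at ha
    rw [ha.2]
  rw [Finset.sum_congr rfl fun i _ => this i]
  exact Finset.sum_fiberwise _ _ _

/-- Potential sum identity: `∑_a (π(head a) − π(tail a)) x_a = ∑_i π i · ρ_x(i)`. -/
lemma pot_sum {V E : Type*} [Fintype V] [Fintype E] [DecidableEq V]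
    (tail head : E → V) (π : V → ℝ) (x : E → ℝ) :
    ∑ a, (π (head a) - π (tail a)) * x a = ∑ i, π i * netInflow tail head x i := by
  simp only [netInflow, mul_sub, sub_mul, Finset.sum_sub_distrib]
  rw [fiber_sum head π x, fiber_sum tail π x]

/-- Monotonicity of the derivative of a convex function. -/
lemma deriv_mono_of_convex {g g' : ℝ → ℝ} (hconv : ConvexOn ℝ Set.univ g)
    (hderiv : ∀ t, HasDerivAt g (g' t) t) {x y : ℝ} (hxy : x ≤ y) : g' x ≤ g' y := by
  rcases eq_or_lt_of_le hxy with rfl | h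
  · exact le_refl _
  · calc g' x ≤ slope g x y := hconv.le_slope_of_hasDerivAt trivial trivial h (hderiv x)
      _ ≤ g' y := hconv.slope_le_of_hasDerivAt trivial trivial h (hderiv y)

/-- if `f, f*` are nonnegative with `ρ_f = ρ_{f*}`, each arc carries a
convex differentiable cost `C_a` with derivative `C'_a`, and `(f,π)` and `(f*,π*)` both
satisfy the optimality (KKT) condition, then every arc `a` with `f_a > 0` is tight for
`(f*,π*)`:  `π*_{head a} − π*_{tail a} = C'_a(f*_a)`. -/
theorem stmt_1 {V E : Type*} [Fintype V] [Fintype E] [DecidableEq V]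
    (tail head : E → V) (C C' : E → ℝ → ℝ)
    (hconv : ∀ a, ConvexOn ℝ Set.univ (C a))
    (hderiv : ∀ a t, HasDerivAt (C a) (C' a t) t)
    (f fs : E → ℝ) (hf : ∀ a, 0 ≤ f a) (hfs : ∀ a, 0 ≤ fs a)
    (hρ : ∀ i, netInflow tail head f i = netInflow tail head fs i)
    (π πs : V → ℝ)
    (hopt : ∀ a, π (head a) - π (tail a) ≤ C' a (f a) ∧
      (0 < f a → π (head a) - π (tail a) = C' a (f a)))
    (hopts : ∀ a, πs (head a) - πs (tail a) ≤ C' a (fs a) ∧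
      (0 < fs a → πs (head a) - πs (tail a) = C' a (fs a))) :
    ∀ a, 0 < f a → πs (head a) - πs (tail a) = C' a (fs a) := by
  -- abbreviations
  set Δ : E → ℝ := fun a => π (head a) - π (tail a) with hΔ
  set Δs : E → ℝ := fun a => πs (head a) - πs (tail a) with hΔs
  -- potential sums are equal for f and fs
  have key : ∀ ψ : V → ℝ, ∑ a, (ψ (head a) - ψ (tail a)) * f a
      = ∑ a, (ψ (head a) - ψ (tail a)) * fs a := by
    intro ψ
    rw [pot_sum, pot_sum]
    exact Finset.sum_congr rfl fun i _ => by rw [hρ i]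
  -- Δ·f = C'(f)·f  and  Δs·fs = C'(fs)·fs  (complementary slackness)
  have hDf : ∑ a, Δ a * f a = ∑ a, C' a (f a) * f a := by
    refine Finset.sum_congr rfl fun a _ => ?_
    rcases lt_or_eq_of_le (hf a) with h | h
    · rw [show Δ a = C' a (f a) from (hopt a).2 h]
    · rw [← h, mul_zero, mul_zero]
  have hDsfs : ∑ a, Δs a * fs a = ∑ a, C' a (fs a) * fs a := by
    refine Finset.sum_congr rfl fun a _ => ?_
    rcases lt_or_eq_of_le (hfs a) with h | h
    · rw [show Δs a = C' a (fs a) from (hopts a).2 h]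
    · rw [← h, mul_zero, mul_zero]
  -- A := ∑ (C'(fs) − Δs)·f ≥ 0 termwise ; B := ∑ (C'(f) − Δ)·fs ≥ 0 termwise
  have hA_term : ∀ a, 0 ≤ (C' a (fs a) - Δs a) * f a := fun a =>
    mul_nonneg (sub_nonneg.2 (hopts a).1) (hf a)
  have hB_term : ∀ a, 0 ≤ (C' a (f a) - Δ a) * fs a := fun a =>
    mul_nonneg (sub_nonneg.2 (hopt a).1) (hfs a)
  have hA_nonneg : 0 ≤ ∑ a, (C' a (fs a) - Δs a) * f a :=
    Finset.sum_nonneg fun a _ => hA_term a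
  have hB_nonneg : 0 ≤ ∑ a, (C' a (f a) - Δ a) * fs a :=
    Finset.sum_nonneg fun a _ => hB_term a
  -- A + B = ∑ (C'(fs) − C'(f))·(f − fs) ≤ 0
  have hAB : (∑ a, (C' a (fs a) - Δs a) * f a) + (∑ a, (C' a (f a) - Δ a) * fs a)
      = ∑ a, (C' a (fs a) - C' a (f a)) * (f a - fs a) := by
    have e1 : ∑ a, Δs a * f a = ∑ a, C' a (fs a) * fs a := by
      rw [key πs]; exact hDsfs
    have e2 : ∑ a, Δ a * fs a = ∑ a, C' a (f a) * f a := by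
      rw [← key π]; exact hDf
    simp only [sub_mul, mul_sub, Finset.sum_sub_distrib]
    rw [e1, e2]; ring
  have hAB_nonpos : (∑ a, (C' a (fs a) - C' a (f a)) * (f a - fs a)) ≤ 0 := by
    refine Finset.sum_nonpos fun a _ => ?_
    rcases le_total (fs a) (f a) with h | h
    · have := deriv_mono_of_convex (hconv a) (hderiv a) h
      exact mul_nonpos_of_nonpos_of_nonneg (sub_nonpos.2 this) (sub_nonneg.2 h)
    · have := deriv_mono_of_convex (hconv a) (hderiv a) h
      exact mul_nonpos_of_nonneg_of_nonpos (sub_nonneg.2 this) (sub_nonpos.2 h)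
  -- hence A = 0, so each (nonnegative) term of A vanishes
  have hA_zero : ∑ a, (C' a (fs a) - Δs a) * f a = 0 := by
    have h1 : (∑ a, (C' a (fs a) - Δs a) * f a) ≤ 0 := by
      have := hAB ▸ hAB_nonpos
      linarith
    linarith
  have := (Finset.sum_eq_zero_iff_of_nonneg (fun a _ => hA_term a)).1 hA_zero
  intro a ha
  have h0 := this a (Finset.mem_univ a)
  have : C' a (fs a) - Δs a = 0 := by
    rcases mul_eq_zero.1 h0 with h | h
    · exact h
    · exact absurd h (ne_of_gt ha)
  simp only [hΔs] at this ⊢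
  linarith
end

section
/- Let F ⊆ E and b : V → ℝ. Suppose (f,π) and (f̄,π̄) are two pairs such that f and f̄ are F-pseudoflows with ρ_f = ρ_{f̄} = b, and both pairs satisfy the F-optimality condition. Then: (i) f_a = f̄_a for every nonlinear arc a; and (ii) for every linear arc a with f_a ≠ f̄_a, one has π_{head(a)} − π_{tail(a)} = C'_a(f_a) = C'_a(f̄_a) = π̄_{head(a)} − π̄_{tail(a)}. -/
open Finset

/-- each arc has a convex differentiable cost `C_a` with derivative `C'_a`,
each arc being linear (`C'_a` constant) or nonlinear (`C'_a` strictly increasing).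
If `f` and `g` are `F`-pseudoflows with `ρ_f = ρ_g = b` and both `(f,π)` and `(g,σ)`
satisfy the `F`-optimality condition (`π_{head} − π_{tail} ≤ C'_a(f_a)` everywhere, with
equality when `a ∈ F` or `f_a > 0`), then (i) `f_a = g_a` on every nonlinear arc, and
(ii) on every linear arc with `f_a ≠ g_a` one has
`π_{head} − π_{tail} = C'_a(f_a) = C'_a(g_a) = σ_{head} − σ_{tail}`. -/
theorem stmt_2 {V E : Type*} [Fintype V] [Fintype E] [DecidableEq V]
    (tail head : E → V) (C C' : E → ℝ → ℝ)
    (hconv : ∀ a, ConvexOn ℝ Set.univ (C a))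
    (hderiv : ∀ a t, HasDerivAt (C a) (C' a t) t)
    (hdich : ∀ a, (∃ γ, ∀ t, C' a t = γ) ∨ StrictMono (C' a))
    (F : Finset E) (b : V → ℝ)
    (f g : E → ℝ) (π σ : V → ℝ)
    (hfP : ∀ a, a ∉ F → 0 ≤ f a) (hgP : ∀ a, a ∉ F → 0 ≤ g a)
    (hfρ : ∀ i, netInflow tail head f i = b i)
    (hgρ : ∀ i, netInflow tail head g i = b i)
    (hfopt : ∀ a, π (head a) - π (tail a) ≤ C' a (f a) ∧
      ((a ∈ F ∨ 0 < f a) → π (head a) - π (tail a) = C' a (f a)))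
    (hgopt : ∀ a, σ (head a) - σ (tail a) ≤ C' a (g a) ∧
      ((a ∈ F ∨ 0 < g a) → σ (head a) - σ (tail a) = C' a (g a))) :
    (∀ a, StrictMono (C' a) → f a = g a) ∧
    (∀ a, (∃ γ, ∀ t, C' a t = γ) → f a ≠ g a →
      π (head a) - π (tail a) = C' a (f a) ∧
      C' a (f a) = C' a (g a) ∧
      C' a (g a) = σ (head a) - σ (tail a)) := by
  classical
  -- the difference is a circulation
  have hnet : ∀ i,
      (∑ a ∈ Finset.univ.filter (fun a => head a = i), (g a - f a))
        - (∑ a ∈ Finset.univ.filter (fun a => tail a = i), (g a - f a)) = 0 := by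
    intro i
    have h1 := hfρ i
    have h2 := hgρ i
    unfold netInflow at h1 h2
    simp only [Finset.sum_sub_distrib]
    linarith
  -- potentials pair to zero against circulations
  have key : ∀ (p : V → ℝ), ∑ a, (p (head a) - p (tail a)) * (g a - f a) = 0 := by
    intro p
    have e1 : ∑ a, p (head a) * (g a - f a)
        = ∑ i, p i * (∑ a ∈ Finset.univ.filter (fun a => head a = i), (g a - f a)) := by
      rw [← Finset.sum_fiberwise Finset.univ head (fun a => p (head a) * (g a - f a))]
      refine Finset.sum_congr rfl fun i _ => ?_
      rw [Finset.mul_sum]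
      refine Finset.sum_congr rfl fun a ha => ?_
      simp only [Finset.mem_filter] at ha
      rw [ha.2]
    have e2 : ∑ a, p (tail a) * (g a - f a)
        = ∑ i, p i * (∑ a ∈ Finset.univ.filter (fun a => tail a = i), (g a - f a)) := by
      rw [← Finset.sum_fiberwise Finset.univ tail (fun a => p (tail a) * (g a - f a))]
      refine Finset.sum_congr rfl fun i _ => ?_
      rw [Finset.mul_sum]
      refine Finset.sum_congr rfl fun a ha => ?_
      simp only [Finset.mem_filter] at ha
      rw [ha.2]
    have e3 : ∑ a, (p (head a) - p (tail a)) * (g a - f a)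
        = (∑ a, p (head a) * (g a - f a)) - ∑ a, p (tail a) * (g a - f a) := by
      rw [← Finset.sum_sub_distrib]
      exact Finset.sum_congr rfl fun a _ => by ring
    rw [e3, e1, e2, ← Finset.sum_sub_distrib]
    refine Finset.sum_eq_zero fun i _ => ?_
    rw [← mul_sub, hnet i, mul_zero]
  -- the three nonnegative families
  set Tπ : E → ℝ := fun a => (C' a (f a) - (π (head a) - π (tail a))) * (g a - f a) with hTπ
  set Tσ : E → ℝ := fun a => (C' a (g a) - (σ (head a) - σ (tail a))) * (f a - g a) with hTσ
  set TM : E → ℝ := fun a => (C' a (g a) - C' a (f a)) * (g a - f a) with hTM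
  have hTπ0 : ∀ a, 0 ≤ Tπ a := by
    intro a
    rcases le_or_gt (f a) (g a) with h | h
    · exact mul_nonneg (by linarith [(hfopt a).1]) (by linarith)
    · have hf : a ∈ F ∨ 0 < f a := by
        by_cases hF : a ∈ F
        · exact Or.inl hF
        · exact Or.inr (lt_of_le_of_lt (hgP a hF) h)
      have := (hfopt a).2 hf
      simp only [hTπ]; rw [this]; simp
  have hTσ0 : ∀ a, 0 ≤ Tσ a := by
    intro a
    rcases le_or_gt (g a) (f a) with h | h
    · exact mul_nonneg (by linarith [(hgopt a).1]) (by linarith)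
    · have hg : a ∈ F ∨ 0 < g a := by
        by_cases hF : a ∈ F
        · exact Or.inl hF
        · exact Or.inr (lt_of_le_of_lt (hfP a hF) h)
      have := (hgopt a).2 hg
      simp only [hTσ]; rw [this]; simp
  have hTM0 : ∀ a, 0 ≤ TM a := by
    intro a
    rcases hdich a with ⟨γ, hγ⟩ | hsm
    · simp [hTM, hγ]
    · rcases lt_trichotomy (f a) (g a) with h | h | h
      · exact le_of_lt (mul_pos (by linarith [hsm h]) (by linarith))
      · simp [hTM, h]
      · exact le_of_lt (mul_pos_of_neg_of_neg (by linarith [hsm h]) (by linarith))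
  -- the three sums add to zero
  have hsum : (∑ a, Tπ a) + (∑ a, Tσ a) + (∑ a, TM a) = 0 := by
    have hπ0 := key π
    have hσ0 := key σ
    have : (∑ a, Tπ a) + (∑ a, Tσ a) + (∑ a, TM a)
        = -(∑ a, (π (head a) - π (tail a)) * (g a - f a))
          - (∑ a, (σ (head a) - σ (tail a)) * (f a - g a)) := by
      rw [← Finset.sum_add_distrib, ← Finset.sum_add_distrib, ← Finset.sum_neg_distrib,
        ← Finset.sum_sub_distrib]
      exact Finset.sum_congr rfl fun a _ => by simp only [hTπ, hTσ, hTM]; ring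
    rw [this]
    have hσ0' : ∑ a, (σ (head a) - σ (tail a)) * (f a - g a) = 0 := by
      rw [← neg_eq_zero, ← Finset.sum_neg_distrib]
      rw [show (∑ a, -((σ (head a) - σ (tail a)) * (f a - g a)))
          = ∑ a, (σ (head a) - σ (tail a)) * (g a - f a) from
        Finset.sum_congr rfl fun a _ => by ring]
      exact key σ
    rw [hπ0, hσ0']; ring
  -- each family sums to zero
  have hSπ : ∑ a, Tπ a = 0 := by
    have h1 : 0 ≤ ∑ a, Tπ a := Finset.sum_nonneg fun a _ => hTπ0 a
    have h2 : 0 ≤ ∑ a, Tσ a := Finset.sum_nonneg fun a _ => hTσ0 a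
    have h3 : 0 ≤ ∑ a, TM a := Finset.sum_nonneg fun a _ => hTM0 a
    linarith
  have hSσ : ∑ a, Tσ a = 0 := by
    have h1 : 0 ≤ ∑ a, Tπ a := Finset.sum_nonneg fun a _ => hTπ0 a
    have h2 : 0 ≤ ∑ a, Tσ a := Finset.sum_nonneg fun a _ => hTσ0 a
    have h3 : 0 ≤ ∑ a, TM a := Finset.sum_nonneg fun a _ => hTM0 a
    linarith
  have hSM : ∑ a, TM a = 0 := by
    have h1 : 0 ≤ ∑ a, Tπ a := Finset.sum_nonneg fun a _ => hTπ0 a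
    have h2 : 0 ≤ ∑ a, Tσ a := Finset.sum_nonneg fun a _ => hTσ0 a
    have h3 : 0 ≤ ∑ a, TM a := Finset.sum_nonneg fun a _ => hTM0 a
    linarith
  -- hence each term is zero
  have hπz : ∀ a, Tπ a = 0 := fun a =>
    (Finset.sum_eq_zero_iff_of_nonneg fun a _ => hTπ0 a).1 hSπ a (Finset.mem_univ a)
  have hσz : ∀ a, Tσ a = 0 := fun a =>
    (Finset.sum_eq_zero_iff_of_nonneg fun a _ => hTσ0 a).1 hSσ a (Finset.mem_univ a)
  have hMz : ∀ a, TM a = 0 := fun a =>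
    (Finset.sum_eq_zero_iff_of_nonneg fun a _ => hTM0 a).1 hSM a (Finset.mem_univ a)
  constructor
  · intro a hsm
    by_contra hne
    rcases lt_or_gt_of_ne hne with h | h
    · have := mul_pos (by linarith [hsm h] : (0:ℝ) < C' a (g a) - C' a (f a)) (by linarith : (0:ℝ) < g a - f a)
      have := hMz a
      simp only [hTM] at this
      linarith
    · have := mul_pos_of_neg_of_neg (by linarith [hsm h] : C' a (g a) - C' a (f a) < 0) (by linarith : g a - f a < 0)
      have := hMz a
      simp only [hTM] at this
      linarith
  · intro a ⟨γ, hγ⟩ hne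
    have hπ := hπz a
    have hσ := hσz a
    simp only [hTπ] at hπ
    simp only [hTσ] at hσ
    have hgf : g a - f a ≠ 0 := sub_ne_zero.2 (Ne.symm hne)
    have hfg : f a - g a ≠ 0 := sub_ne_zero.2 hne
    have h1 : C' a (f a) - (π (head a) - π (tail a)) = 0 :=
      (mul_eq_zero.1 hπ).resolve_right hgf
    have h2 : C' a (g a) - (σ (head a) - σ (tail a)) = 0 :=
      (mul_eq_zero.1 hσ).resolve_right hfg
    refine ⟨by linarith, by rw [hγ, hγ], by linarith⟩
end

section
/- Let F ⊆ E and b : V → ℝ, and assume F ⊆ F* in the following sense: for every g : E → ℝ with g ≥ 0 and ρ_g = b and every σ : V → ℝ such that (g,σ) satisfies the optimality condition, one has σ_{head(a)} − σ_{tail(a)} = C'_a(g_a) for all a ∈ F. Suppose (f,π) is such that f is an F-pseudoflow with ρ_f = b and (f,π) satisfies the F-optimality condition, and let H := { a ∈ E : a is linear and π_{head(a)} − π_{tail(a)} = C'_a(f_a) }. Then for every h : E → ℝ the following are equivalent: (1) h ≥ 0, ρ_h = b, and there exists σ : V → ℝ such that (h,σ) satisfies the optimality condition; (2) h ≥ 0,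 ρ_h = b, and h_a = f_a for every a ∉ H. -/
open Finset

lemma fiber_sum_aux {V E : Type*} [Fintype V] [Fintype E] [DecidableEq V]
    (g : E → V) (x : E → ℝ) (p : V → ℝ) :
    ∑ i, p i * (∑ a ∈ Finset.univ.filter (fun a => g a = i), x a)
      = ∑ a, p (g a) * x a := by
  rw [← Finset.sum_fiberwise Finset.univ g (fun a => p (g a) * x a)]
  refine Finset.sum_congr rfl fun i _ => ?_
  rw [Finset.mul_sum]
  refine Finset.sum_congr rfl fun a ha => ?_
  simp only [Finset.mem_filter] at ha
  rw [ha.2]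

lemma potential_sum {V E : Type*} [Fintype V] [Fintype E] [DecidableEq V]
    (tail head : E → V) (x : E → ℝ) (p : V → ℝ) :
    ∑ a, (p (head a) - p (tail a)) * x a = ∑ i, p i * netInflow tail head x i := by
  simp only [netInflow, mul_sub, sub_mul, Finset.sum_sub_distrib]
  rw [fiber_sum_aux head x p, fiber_sum_aux tail x p]

/-- suppose every arc of `F` is tight for every optimal pair (`F ⊆ F*`), and
`(f,π)` is an `F`-pseudoflow with `ρ_f = b` satisfying the `F`-optimality condition.
With `H` the set of linear arcs on which `π` is tight at `f`, a vector `h` is an optimal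
solution (nonnegative with `ρ_h = b` and KKT potentials) if and only if it is nonnegative
with `ρ_h = b` and agrees with `f` outside `H`. -/
theorem stmt_3 {V E : Type*} [Fintype V] [Fintype E] [DecidableEq V]
    (tail head : E → V) (C C' : E → ℝ → ℝ)
    (hconv : ∀ a, ConvexOn ℝ Set.univ (C a))
    (hderiv : ∀ a t, HasDerivAt (C a) (C' a t) t)
    (hdich : ∀ a, (∃ γ, ∀ t, C' a t = γ) ∨ StrictMono (C' a))
    (F : Finset E) (b : V → ℝ)
    (hFstar : ∀ g : E → ℝ, (∀ a, 0 ≤ g a) →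
      (∀ i, netInflow tail head g i = b i) →
      ∀ σ : V → ℝ,
        (∀ a, σ (head a) - σ (tail a) ≤ C' a (g a) ∧
          (0 < g a → σ (head a) - σ (tail a) = C' a (g a))) →
        ∀ a ∈ F, σ (head a) - σ (tail a) = C' a (g a))
    (f : E → ℝ) (π : V → ℝ)
    (hfP : ∀ a, a ∉ F → 0 ≤ f a)
    (hfρ : ∀ i, netInflow tail head f i = b i)
    (hfopt : ∀ a, π (head a) - π (tail a) ≤ C' a (f a) ∧
      ((a ∈ F ∨ 0 < f a) → π (head a) - π (tail a) = C' a (f a))) :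
    ∀ h : E → ℝ,
      ((∀ a, 0 ≤ h a) ∧ (∀ i, netInflow tail head h i = b i) ∧
        ∃ σ : V → ℝ, ∀ a, σ (head a) - σ (tail a) ≤ C' a (h a) ∧
          (0 < h a → σ (head a) - σ (tail a) = C' a (h a)))
      ↔
      ((∀ a, 0 ≤ h a) ∧ (∀ i, netInflow tail head h i = b i) ∧
        ∀ a, ¬ ((∃ γ, ∀ t, C' a t = γ) ∧ π (head a) - π (tail a) = C' a (f a)) →
          h a = f a) := by
  intro h
  constructor
  · rintro ⟨hpos, hρ, σ, hσ⟩
    refine ⟨hpos, hρ, ?_⟩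
    set d : E → ℝ := fun a => C' a (f a) - (π (head a) - π (tail a)) with hd
    set e : E → ℝ := fun a => C' a (h a) - (σ (head a) - σ (tail a)) with he
    have hd0 : ∀ a, 0 ≤ d a := fun a => sub_nonneg.2 (hfopt a).1
    have he0 : ∀ a, 0 ≤ e a := fun a => sub_nonneg.2 (hσ a).1
    have hdf : ∀ a, d a * f a = 0 := by
      intro a
      by_cases haF : a ∈ F
      · have := (hfopt a).2 (Or.inl haF)
        simp [hd, this]
      · rcases lt_or_ge 0 (f a) with hlt | hle
        · have := (hfopt a).2 (Or.inr hlt)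
          simp [hd, this]
        · have : f a = 0 := le_antisymm hle (hfP a haF)
          simp [this]
    have heh : ∀ a, e a * h a = 0 := by
      intro a
      rcases lt_or_ge 0 (h a) with hlt | hle
      · have := (hσ a).2 hlt
        simp [he, this]
      · have : h a = 0 := le_antisymm hle (hpos a)
        simp [this]
    have heF : ∀ a ∈ F, e a = 0 := by
      intro a haF
      have := hFstar h hpos hρ σ hσ a haF
      simp [he, this]
    -- potential sums vanish on the difference h - f
    have hπsum : ∑ a, (π (head a) - π (tail a)) * (h a - f a) = 0 := by
      simp only [mul_sub, Finset.sum_sub_distrib]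
      rw [potential_sum, potential_sum]
      simp only [hρ, hfρ, sub_self]
    have hσsum : ∑ a, (σ (head a) - σ (tail a)) * (h a - f a) = 0 := by
      simp only [mul_sub, Finset.sum_sub_distrib]
      rw [potential_sum, potential_sum]
      simp only [hρ, hfρ, sub_self]
    -- pointwise identity
    have hpt : ∀ a, (C' a (f a) - C' a (h a)) * (h a - f a)
        = (π (head a) - π (tail a)) * (h a - f a)
          - (σ (head a) - σ (tail a)) * (h a - f a)
          + (d a * h a + e a * f a) := by
      intro a
      have h1 := hdf a
      have h2 := heh a
      simp only [hd, he] at *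
      nlinarith [h1, h2]
    have hsum : ∑ a, (C' a (f a) - C' a (h a)) * (h a - f a)
        = ∑ a, (d a * h a + e a * f a) := by
      calc ∑ a, (C' a (f a) - C' a (h a)) * (h a - f a)
          = ∑ a, ((π (head a) - π (tail a)) * (h a - f a)
              - (σ (head a) - σ (tail a)) * (h a - f a)
              + (d a * h a + e a * f a)) := Finset.sum_congr rfl fun a _ => hpt a
        _ = ∑ a, (d a * h a + e a * f a) := by
              simp only [Finset.sum_add_distrib, Finset.sum_sub_distrib, hπsum, hσsum]
              ring
    have hterm_nonpos : ∀ a, (C' a (f a) - C' a (h a)) * (h a - f a) ≤ 0 := by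
      intro a
      rcases hdich a with ⟨γ, hγ⟩ | hm
      · simp [hγ]
      · rcases lt_trichotomy (f a) (h a) with hlt | heq | hgt
        · nlinarith [hm hlt]
        · simp [heq]
        · nlinarith [hm hgt]
    have hterm_nonneg : ∀ a, 0 ≤ d a * h a + e a * f a := by
      intro a
      have h1 : 0 ≤ d a * h a := mul_nonneg (hd0 a) (hpos a)
      have h2 : 0 ≤ e a * f a := by
        by_cases haF : a ∈ F
        · simp [heF a haF]
        · exact mul_nonneg (he0 a) (hfP a haF)
      linarith
    have hS0 : ∑ a, (d a * h a + e a * f a) = 0 := by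
      have h1 : ∑ a, (C' a (f a) - C' a (h a)) * (h a - f a) ≤ 0 :=
        Finset.sum_nonpos fun a _ => hterm_nonpos a
      have h2 : (0:ℝ) ≤ ∑ a, (d a * h a + e a * f a) :=
        Finset.sum_nonneg fun a _ => hterm_nonneg a
      linarith [hsum]
    have hT0 : ∑ a, (C' a (f a) - C' a (h a)) * (h a - f a) = 0 := by
      rw [hsum]; exact hS0
    have hterm0 : ∀ a, d a * h a + e a * f a = 0 := by
      intro a
      have := (Finset.sum_eq_zero_iff_of_nonneg (fun a _ => hterm_nonneg a)).1 hS0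
      exact this a (Finset.mem_univ a)
    have hCterm0 : ∀ a, (C' a (f a) - C' a (h a)) * (h a - f a) = 0 := by
      intro a
      have := (Finset.sum_eq_zero_iff_of_nonpos (fun a _ => hterm_nonpos a)).1 hT0
      exact this a (Finset.mem_univ a)
    -- conclude
    intro a ha
    rcases hdich a with hlin | hm
    · push_neg at ha
      have hne : π (head a) - π (tail a) ≠ C' a (f a) := ha hlin
      have hdpos : 0 < d a := lt_of_le_of_ne (hd0 a) (by
        intro hcontra
        exact hne (by simp only [hd] at hcontra; linarith))
      have hh0 : h a = 0 := by
        have h1 : d a * h a = 0 := by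
          have h2 : 0 ≤ e a * f a := by
            by_cases haF : a ∈ F
            · simp [heF a haF]
            · exact mul_nonneg (he0 a) (hfP a haF)
          have h3 : 0 ≤ d a * h a := mul_nonneg (hd0 a) (hpos a)
          linarith [hterm0 a]
        rcases mul_eq_zero.1 h1 with h | h
        · exact absurd h (ne_of_gt hdpos)
        · exact h
      have hf0 : f a = 0 := by
        by_cases haF : a ∈ F
        · have := (hfopt a).2 (Or.inl haF)
          exact absurd this hne
        · rcases lt_or_ge 0 (f a) with hlt | hle
          · exact absurd ((hfopt a).2 (Or.inr hlt)) hne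
          · exact le_antisymm hle (hfP a haF)
      rw [hh0, hf0]
    · by_contra hne
      rcases lt_trichotomy (f a) (h a) with hlt | heq | hgt
      · have := hm hlt
        nlinarith [hCterm0 a]
      · exact hne heq.symm
      · have := hm hgt
        nlinarith [hCterm0 a]
  · rintro ⟨hpos, hρ, hagree⟩
    refine ⟨hpos, hρ, π, ?_⟩
    intro a
    by_cases hH : (∃ γ, ∀ t, C' a t = γ) ∧ π (head a) - π (tail a) = C' a (f a)
    · obtain ⟨⟨γ, hγ⟩, ht⟩ := hH
      have heq : π (head a) - π (tail a) = C' a (h a) := by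
        rw [hγ (h a), ← hγ (f a), ← ht]
      exact ⟨le_of_eq heq, fun _ => heq⟩
    · have := hagree a hH
      rw [this]
      exact ⟨(hfopt a).1, fun hp => (hfopt a).2 (Or.inr hp)⟩
end

section
/- Let F ⊆ E, Δ > 0, and let f be an F-pseudoflow that is (Δ,F)-feasible with witness π. Let P⁺, P⁻ ⊆ E be disjoint sets of arcs (the forward and backward arcs of a shortest augmenting path) such that π_{head(a)} − π_{tail(a)} = C'_a(f_a + Δ) for every a ∈ P⁺, and for every a ∈ P⁻: (a ∈ F or f_a ≥ Δ) and π_{head(a)} − π_{tail(a)} = C'_a(f_a − Δ). Define f' by f'_a = f_a + Δ for a ∈ P⁺, f'_a = f_a − Δ for a ∈ P⁻, and f'_a = f_a otherwise. Then f' is an F-pseudoflow and f' is (Δ,F)-feasible with the same witness π. -/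
open Finset

lemma Cmono {C : ℝ → ℝ} {C' : ℝ → ℝ} (hconv : ConvexOn ℝ Set.univ C)
    (hderiv : ∀ t, HasDerivAt C (C' t) t) {s t : ℝ} (h : s ≤ t) : C' s ≤ C' t := by
  have hm := hconv.monotoneOn_deriv (fun x _ => (hderiv x).differentiableAt)
  have hs := (hderiv s).deriv
  have ht := (hderiv t).deriv
  rw [← hs, ← ht]
  exact hm (Set.mem_univ s) (Set.mem_univ t) h

/-- augmenting along a shortest path preserves `(Δ,F)`-feasibility:
let `f` be a `(Δ,F)`-feasible `F`-pseudoflow with witness `π`, and let `P⁺, P⁻` be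
disjoint arc sets on which the shortest-path tightness conditions hold.  Then the flow
`f'` obtained by sending `Δ` units along the path (increase on `P⁺`, decrease on `P⁻`)
is again an `F`-pseudoflow, `(Δ,F)`-feasible with the same witness `π`. -/
theorem stmt_5 {V E : Type*} [Fintype V] [Fintype E]
    (tail head : E → V) (C C' : E → ℝ → ℝ)
    (hconv : ∀ a, ConvexOn ℝ Set.univ (C a))
    (hderiv : ∀ a t, HasDerivAt (C a) (C' a t) t)
    (F : Finset E) (Δ : ℝ) (hΔ : 0 < Δ)
    (f : E → ℝ) (π : V → ℝ)
    (hfP : ∀ a, a ∉ F → 0 ≤ f a)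
    (hfeas : ∀ a, (π (head a) - π (tail a) ≤ C' a (f a + Δ)) ∧
      ((a ∈ F ∨ Δ ≤ f a) → C' a (f a - Δ) ≤ π (head a) - π (tail a)))
    (Pp Pm : Finset E) (hdisj : Disjoint Pp Pm)
    (hPp : ∀ a ∈ Pp, π (head a) - π (tail a) = C' a (f a + Δ))
    (hPm : ∀ a ∈ Pm, (a ∈ F ∨ Δ ≤ f a) ∧ π (head a) - π (tail a) = C' a (f a - Δ))
    (f' : E → ℝ)
    (hf'p : ∀ a ∈ Pp, f' a = f a + Δ)
    (hf'm : ∀ a ∈ Pm, f' a = f a - Δ)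
    (hf'0 : ∀ a, a ∉ Pp → a ∉ Pm → f' a = f a) :
    (∀ a, a ∉ F → 0 ≤ f' a) ∧
    (∀ a, (π (head a) - π (tail a) ≤ C' a (f' a + Δ)) ∧
      ((a ∈ F ∨ Δ ≤ f' a) → C' a (f' a - Δ) ≤ π (head a) - π (tail a))) := by
  have mono : ∀ a : E, ∀ {s t : ℝ}, s ≤ t → C' a s ≤ C' a t :=
    fun a {s t} h => Cmono (hconv a) (hderiv a) h
  constructor
  · intro a haF
    by_cases hp : a ∈ Pp
    · rw [hf'p a hp]; have := hfP a haF; linarith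
    by_cases hm : a ∈ Pm
    · rw [hf'm a hm]
      rcases (hPm a hm).1 with h | h
      · exact absurd h haF
      · linarith
    · rw [hf'0 a hp hm]; exact hfP a haF
  · intro a
    by_cases hp : a ∈ Pp
    · rw [hf'p a hp]
      constructor
      · calc π (head a) - π (tail a) = C' a (f a + Δ) := hPp a hp
          _ ≤ C' a (f a + Δ + Δ) := mono a (by linarith)
      · intro _
        have : C' a (f a + Δ - Δ) ≤ C' a (f a + Δ) := mono a (by linarith)
        rw [hPp a hp]; exact this
    by_cases hm : a ∈ Pm
    · rw [hf'm a hm]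
      constructor
      · rw [(hPm a hm).2]; exact mono a (by linarith)
      · intro _
        rw [(hPm a hm).2]; exact mono a (by linarith)
    · rw [hf'0 a hp hm]; exact hfeas a
end

section
/- Let F ⊆ E, Δ > 0, let f be a (Δ,F)-feasible F-pseudoflow, and let f̂ be an F-pseudoflow with f̂_a = 0 for every a ∉ F. Then f̂ is (Δ + ||f − f̂||_∞, F)-feasible, where ||f − f̂||_∞ = max_{a∈E} |f_a − f̂_a|; moreover any witness π for the (Δ,F)-feasibility of f is also a witness for f̂. -/
open Finset

/-- if `f` is a `(Δ,F)`-feasible `F`-pseudoflow with witness `π` and `f̂` is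
an `F`-pseudoflow vanishing outside `F`, then `f̂` is `(Δ + ‖f − f̂‖_∞, F)`-feasible with
the same witness `π` (here `‖·‖` is the sup norm on `E → ℝ`). -/
theorem stmt_9 {V E : Type*} [Fintype V] [Fintype E]
    (tail head : E → V) (C C' : E → ℝ → ℝ)
    (hconv : ∀ a, ConvexOn ℝ Set.univ (C a))
    (hderiv : ∀ a t, HasDerivAt (C a) (C' a t) t)
    (F : Finset E) (Δ : ℝ) (hΔ : 0 < Δ)
    (f fhat : E → ℝ)
    (hfP : ∀ a, a ∉ F → 0 ≤ f a)
    (hfhat0 : ∀ a, a ∉ F → fhat a = 0)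
    (π : V → ℝ)
    (hfeas : ∀ a, (π (head a) - π (tail a) ≤ C' a (f a + Δ)) ∧
      ((a ∈ F ∨ Δ ≤ f a) → C' a (f a - Δ) ≤ π (head a) - π (tail a))) :
    ∀ a, (π (head a) - π (tail a) ≤ C' a (fhat a + (Δ + ‖f - fhat‖))) ∧
      ((a ∈ F ∨ Δ + ‖f - fhat‖ ≤ fhat a) →
        C' a (fhat a - (Δ + ‖f - fhat‖)) ≤ π (head a) - π (tail a)) := by
  intro a
  have hmono : Monotone (C' a) := by
    have h := (hconv a).monotoneOn_deriv (fun x _ => (hderiv a x).differentiableAt)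
    intro x y hxy
    have hx := (hderiv a x).deriv
    have hy := (hderiv a y).deriv
    rw [← hx, ← hy]
    exact h (Set.mem_univ x) (Set.mem_univ y) hxy
  have hN : |f a - fhat a| ≤ ‖f - fhat‖ := by
    calc |f a - fhat a| = ‖(f - fhat) a‖ := by simp [Pi.sub_apply, Real.norm_eq_abs]
    _ ≤ ‖f - fhat‖ := norm_le_pi_norm (f - fhat) a
  have hN0 : (0:ℝ) ≤ ‖f - fhat‖ := norm_nonneg _
  rw [abs_le] at hN
  constructor
  · refine (hfeas a).1.trans (hmono ?_)
    linarith [hN.2]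
  · intro h
    by_cases hF : a ∈ F
    · refine le_trans (hmono ?_) ((hfeas a).2 (Or.inl hF))
      linarith [hN.1]
    · have h0 := hfhat0 a hF
      rcases h with hF' | hle
      · exact absurd hF' hF
      · linarith
end

section
/- Let B and G be finite sets (buyers and goods), E ⊆ B × G, E' ⊆ E, U : E → ℝ with U_{ij} > 0 for all (i,j) ∈ E, and P : G → ℝ with P_j > 0 for all j. For j, j' ∈ G define β_{jj'} := max{ U_{ij'}/U_{ij} : i ∈ B, (i,j) ∈ E', (i,j') ∈ E }, with β_{jj'} := 0 if no such i exists. Then there exist R : B → ℝ such that U_{ij}/P_j ≤ R_i for all (i,j) ∈ E, with equality whenever (i,j) ∈ E', if and only if P_{j'} ≥ P_j · β_{jj'} holds for all j, j' ∈ G. -/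
open Finset

/-- correctness of the price-consistency criterion for linear Fisher
markets: with buyers `B`, goods `G`, pairs `E` (positive utility) and `E' ⊆ E` (pairs
forced tight), positive utilities `U` on `E` and positive prices `P`, let
`β j j' = max { U i j' / U i j : i ∈ B, (i,j) ∈ E', (i,j') ∈ E }` (`0` if no such `i`).
Then bang-per-buck values `R` with `U i j / P j ≤ R i` on `E`, tight on `E'`, exist iff
`P j' ≥ P j · β j j'` for all goods `j, j'`. -/
theorem stmt_13 {B G : Type*} [Fintype B] [Fintype G]
    (E E' : Finset (B × G)) (hE' : E' ⊆ E)
    (U : B → G → ℝ) (hU : ∀ i j, (i, j) ∈ E → 0 < U i j)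
    (P : G → ℝ) (hP : ∀ j, 0 < P j)
    (β : G → G → ℝ)
    (hβub : ∀ j j' i, (i, j) ∈ E' → (i, j') ∈ E → U i j' / U i j ≤ β j j')
    (hβmax : ∀ j j', (∃ i, (i, j) ∈ E' ∧ (i, j') ∈ E) →
      ∃ i, (i, j) ∈ E' ∧ (i, j') ∈ E ∧ β j j' = U i j' / U i j)
    (hβ0 : ∀ j j', (¬ ∃ i, (i, j) ∈ E' ∧ (i, j') ∈ E) → β j j' = 0) :
    (∃ R : B → ℝ, ∀ i j, (i, j) ∈ E →
        (U i j / P j ≤ R i ∧ ((i, j) ∈ E' → U i j / P j = R i)))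
      ↔ (∀ j j', P j * β j j' ≤ P j') := by
  classical
  constructor
  · rintro ⟨R, hR⟩ j j'
    by_cases h : ∃ i, (i, j) ∈ E' ∧ (i, j') ∈ E
    · obtain ⟨i, hi1, hi2, hβ⟩ := hβmax j j' h
      have hiE : (i, j) ∈ E := hE' hi1
      have h1 := (hR i j hiE).2 hi1
      have h2 := (hR i j' hi2).1
      rw [← h1] at h2
      have hUij := hU i j hiE
      have h3 := (div_le_div_iff₀ (hP j') (hP j)).mp h2
      rw [hβ, ← mul_div_assoc, div_le_iff₀ hUij]
      nlinarith
    · rw [hβ0 j j' h, mul_zero]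
      exact (hP j').le
  · intro hp
    refine ⟨fun i => if h : (univ.filter (fun j => (i, j) ∈ E)).Nonempty
      then (univ.filter (fun j => (i, j) ∈ E)).sup' h (fun j => U i j / P j) else 0, ?_⟩
    intro i j hij
    have hjS : j ∈ univ.filter (fun j => (i, j) ∈ E) := by simp [hij]
    have hne : (univ.filter (fun j => (i, j) ∈ E)).Nonempty := ⟨j, hjS⟩
    simp only [dif_pos hne]
    refine ⟨Finset.le_sup' (fun j => U i j / P j) hjS, fun hij' => ?_⟩
    refine le_antisymm (Finset.le_sup' (fun j => U i j / P j) hjS) (Finset.sup'_le _ _ fun j' hj' => ?_)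
    have hj'E : (i, j') ∈ E := by simpa using hj'
    have h1 := hβub j j' i hij' hj'E
    have h2 := hp j j'
    have hUij := hU i j hij
    have h3 : P j * (U i j' / U i j) ≤ P j' :=
      le_trans (mul_le_mul_of_nonneg_left h1 (hP j).le) h2
    rw [← mul_div_assoc, div_le_iff₀ hUij] at h3
    rw [div_le_div_iff₀ (hP j') (hP j)]
    nlinarith
end

section
/- Let G be a finite nonempty set and β̃ : G × G → ℝ satisfy β̃_{jj'} ≥ 0 for all j,j', β̃_{jj} = 1 for all j, and β̃_{jj''} ≥ β̃_{jj'} · β̃_{j'j''} for all j, j', j'' ∈ G. Let p : G → ℝ with p_j ≥ 0 for all j. Define Δ := max{ 0, max_{j,j'∈G} (p_j β̃_{jj'} − p_{j'})/(β̃_{jj'} + 1) } and P_j := max_{h∈G} β̃_{hj}(p_h − Δ). Then for all j, j' ∈ G: (a) p_j − Δ ≤ P_j ≤ p_j + Δ, and (b) P_{j'} ≥ β̃_{jj'} · P_j. -/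
open Finset

/-- correctness of the `Error` subroutine for Fisher markets: let `G` be
finite nonempty, `β̃ ≥ 0` with unit diagonal and `β̃ j j'' ≥ β̃ j j' · β̃ j' j''`, and
`p ≥ 0`.  With `Δ := max(0, max_{j,j'} (p_j β̃_{jj'} − p_{j'})/(β̃_{jj'} + 1))` and
`P_j := max_h β̃_{hj}(p_h − Δ)`, one has `p_j − Δ ≤ P_j ≤ p_j + Δ` and
`P_{j'} ≥ β̃_{jj'} P_j` for all `j, j'`. -/
theorem stmt_14 {G : Type*} [Fintype G] [Nonempty G]
    (β : G → G → ℝ)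
    (hβ0 : ∀ j j', 0 ≤ β j j')
    (hβd : ∀ j, β j j = 1)
    (hβt : ∀ j j' j'', β j j' * β j' j'' ≤ β j j'')
    (p : G → ℝ) (hp : ∀ j, 0 ≤ p j)
    (Δ : ℝ)
    (hΔ : Δ = max 0 (Finset.univ.sup' Finset.univ_nonempty
      (fun jj' : G × G => (p jj'.1 * β jj'.1 jj'.2 - p jj'.2) / (β jj'.1 jj'.2 + 1))))
    (P : G → ℝ)
    (hP : ∀ j, P j = Finset.univ.sup' Finset.univ_nonempty
      (fun h : G => β h j * (p h - Δ))) :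
    ∀ j j', (p j - Δ ≤ P j ∧ P j ≤ p j + Δ) ∧ β j j' * P j ≤ P j' := by
  have hΔ0 : 0 ≤ Δ := by rw [hΔ]; exact le_max_left _ _
  -- key inequality from definition of Δ
  have hkey : ∀ j j', β j j' * (p j - Δ) ≤ p j' + Δ := by
    intro j j'
    have h1 : (p j * β j j' - p j') / (β j j' + 1) ≤ Δ := by
      rw [hΔ]
      exact le_max_of_le_right (Finset.le_sup'
        (fun jj' : G × G => (p jj'.1 * β jj'.1 jj'.2 - p jj'.2) / (β jj'.1 jj'.2 + 1))
        (Finset.mem_univ (j, j')))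
    have hpos : (0:ℝ) < β j j' + 1 := by have := hβ0 j j'; linarith
    rw [div_le_iff₀ hpos] at h1
    nlinarith [hβ0 j j']
  -- there is some h with Δ ≤ p h
  have hex : ∃ h : G, Δ ≤ p h := by
    rcases max_cases (0:ℝ) (Finset.univ.sup' Finset.univ_nonempty
      (fun jj' : G × G => (p jj'.1 * β jj'.1 jj'.2 - p jj'.2) / (β jj'.1 jj'.2 + 1))) with
      ⟨h1, _⟩ | ⟨h1, _⟩
    · exact ⟨Classical.arbitrary G, by rw [hΔ, h1]; exact hp _⟩
    · obtain ⟨ab, -, hab⟩ := Finset.exists_mem_eq_sup' Finset.univ_nonempty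
        (fun jj' : G × G => (p jj'.1 * β jj'.1 jj'.2 - p jj'.2) / (β jj'.1 jj'.2 + 1))
      refine ⟨ab.1, ?_⟩
      have hΔeq : Δ = (p ab.1 * β ab.1 ab.2 - p ab.2) / (β ab.1 ab.2 + 1) := by
        rw [hΔ, h1, hab]
      have hpos : (0:ℝ) < β ab.1 ab.2 + 1 := by have := hβ0 ab.1 ab.2; linarith
      have heq : Δ * (β ab.1 ab.2 + 1) = p ab.1 * β ab.1 ab.2 - p ab.2 := by
        rw [hΔeq]; field_simp
      nlinarith [hβ0 ab.1 ab.2, hp ab.2, hp ab.1]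
  -- P is nonnegative
  have hP0 : ∀ j, 0 ≤ P j := by
    intro j
    obtain ⟨h, hh⟩ := hex
    have : β h j * (p h - Δ) ≤ P j := by
      rw [hP]; exact Finset.le_sup' (fun h : G => β h j * (p h - Δ)) (Finset.mem_univ h)
    have := mul_nonneg (hβ0 h j) (by linarith : (0:ℝ) ≤ p h - Δ)
    linarith
  intro j j'
  refine ⟨⟨?_, ?_⟩, ?_⟩
  · have : β j j * (p j - Δ) ≤ P j := by
      rw [hP]; exact Finset.le_sup' (fun h : G => β h j * (p h - Δ)) (Finset.mem_univ j)
    rw [hβd j, one_mul] at this; exact this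
  · rw [hP]
    exact Finset.sup'_le _ _ (fun h _ => hkey h j)
  · obtain ⟨h, -, hh⟩ := Finset.exists_mem_eq_sup' Finset.univ_nonempty
      (fun h : G => β h j * (p h - Δ))
    have hPj : P j = β h j * (p h - Δ) := by rw [hP, hh]
    rcases le_or_gt 0 (p h - Δ) with hc | hc
    · have h1 : β h j * β j j' ≤ β h j' := hβt h j j'
      have h2 : β h j' * (p h - Δ) ≤ P j' := by
        rw [hP]; exact Finset.le_sup' (fun g : G => β g j' * (p g - Δ)) (Finset.mem_univ h)
      calc β j j' * P j = (β h j * β j j') * (p h - Δ) := by rw [hPj]; ring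
        _ ≤ β h j' * (p h - Δ) := mul_le_mul_of_nonneg_right h1 hc
        _ ≤ P j' := h2
    · have : P j ≤ 0 := by
        rw [hPj]
        exact mul_nonpos_of_nonneg_of_nonpos (hβ0 h j) (le_of_lt hc)
      have : β j j' * P j ≤ 0 := mul_nonpos_of_nonneg_of_nonpos (hβ0 j j') this
      linarith [hP0 j']
end

section
/- Let B and G be finite disjoint sets (buyers and goods), E ⊆ B × G, U : E → ℝ with U_{ij} > 0 on E, and budgets m : B → ℝ. Suppose f : E → ℝ with f ≥ 0, p : G → ℝ with p_j > 0 for all j, Σ_{j:(i,j)∈E} f_{ij} = m_i for every buyer i, and Σ_{i:(i,j)∈E} f_{ij} = p_j for every good j. Suppose further there exists π : B ∪ G → ℝ such that π_j = −log p_j for every j ∈ G, and for every (i,j) ∈ E: π_j − π_i ≤ −log U_{ij}, with equality whenever f_{ij} > 0. Then, setting β_i := e^{π_i}, one has U_{ij}/p_j ≤ β_i for every (i,j) ∈ E, with equality whenever f_{ij} > 0; in particular, f_{ij} > 0 implies U_{ij}/p_j = max{ U_{ij'}/p_{j'} : (i,j') ∈ E }, i.e., the prices p and allocations f form a market equilibrium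 in which every buyer spends only on goods maximizing bang-per-buck. -/
open Finset

/-- a KKT point of Shmyrev's formulation is a Fisher market equilibrium:
with buyers `B`, goods `G`, pairs `E`, positive utilities `U` on `E`, budgets `m`,
money allocations `f ≥ 0` whose row sums are the budgets and whose column sums are the
positive prices `p`, and potentials `πB, πG` with `πG j = −log p_j` and
`πG j − πB i ≤ −log U_{ij}` on `E` (equality where `f_{ij} > 0`): setting
`β_i = exp(πB i)`, one has `U_{ij}/p_j ≤ β_i` on `E` with equality where `f_{ij} > 0`;
in particular every buyer spends only on goods maximizing bang-per-buck. -/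
theorem stmt_15 {B G : Type*} [Fintype B] [Fintype G] [DecidableEq B] [DecidableEq G]
    (E : Finset (B × G))
    (U : B → G → ℝ) (hU : ∀ i j, (i, j) ∈ E → 0 < U i j)
    (m : B → ℝ)
    (f : B → G → ℝ) (hf0 : ∀ i j, 0 ≤ f i j)
    (p : G → ℝ) (hp : ∀ j, 0 < p j)
    (hrow : ∀ i, ∑ j ∈ Finset.univ.filter (fun j => (i, j) ∈ E), f i j = m i)
    (hcol : ∀ j, ∑ i ∈ Finset.univ.filter (fun i => (i, j) ∈ E), f i j = p j)
    (πB : B → ℝ) (πG : G → ℝ)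
    (hπG : ∀ j, πG j = - Real.log (p j))
    (hopt : ∀ i j, (i, j) ∈ E → (πG j - πB i ≤ - Real.log (U i j) ∧
      (0 < f i j → πG j - πB i = - Real.log (U i j)))) :
    (∀ i j, (i, j) ∈ E → (U i j / p j ≤ Real.exp (πB i) ∧
      (0 < f i j → U i j / p j = Real.exp (πB i)))) ∧
    (∀ i j, (i, j) ∈ E → 0 < f i j →
      ∀ j', (i, j') ∈ E → U i j' / p j' ≤ U i j / p j) := by
  have key : ∀ i j, (i, j) ∈ E → (U i j / p j ≤ Real.exp (πB i) ∧
      (0 < f i j → U i j / p j = Real.exp (πB i))) := by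
    intro i j hij
    have hUp : U i j / p j = Real.exp (Real.log (U i j) - Real.log (p j)) := by
      rw [Real.exp_sub, Real.exp_log (hU i j hij), Real.exp_log (hp j)]
    obtain ⟨h1, h2⟩ := hopt i j hij
    rw [hπG j] at h1 h2
    constructor
    · rw [hUp]
      exact Real.exp_le_exp.2 (by linarith)
    · intro hf
      rw [hUp]
      exact congrArg Real.exp (by linarith [h2 hf])
  refine ⟨key, fun i j hij hf j' hij' => ?_⟩
  calc U i j' / p j' ≤ Real.exp (πB i) := (key i j' hij').1
    _ = U i j / p j := ((key i j hij).2 hf).symm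
end
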